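/- Let l be an odd prime number, n ≥ 1, and let g ∈ GL_n(ℤ_l) be congruent to the identity matrix modulo l. Then the subgroup of ℚ̄_l^× generated by the eigenvalues of g (in a fixed algebraic closure ℚ̄_l of ℚ_l) contains no root of unity other than 1, i.e. it is torsion-free. In particular, the first congruence kernel K_l^{(1)} = ker(GL_n(ℤ_l) → GL_n(ℤ/lℤ)) is a neat subgroup of GL_n(ℚ_l). -/

import Mathlib

/-! If `g = 1 + l • H` with `H` integral, every eigenvalue of `g` is `1 + l μ` with `μ` a root of
the characteristic polynomial of `H`; so `μ` is integral over `ℤ_l` and has spectral norm at most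
`1`. Hence the eigenvalues generate a subgroup of the units `x` of `ℚ̄_l` with `‖x - 1‖ ≤ 1/l`,
which is torsion-free for odd `l`: if `x = 1 + y ≠ 1` and `x ^ p = 1` with `p` prime, dividing the
binomial expansion by `y` gives `p = -∑_{k ≥ 2} C(p, k) y^(k-1)`, a sum of terms of norm at most
`‖p‖ / l`. -/

open Polynomial

/-- The subgroup `Eig_l(g)` of `ℚ̄_l^×` generated by the eigenvalues (in a fixed
algebraic closure `ℚ̄_l` of `ℚ_l`) of a matrix `g` with coefficients in `ℚ_l`, i.e. by
the units of `ℚ̄_l` that are roots of the characteristic polynomial of `g`. -/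
noncomputable def eigenvalueGroup (l : ℕ) [Fact l.Prime] (n : ℕ)
    (g : Matrix (Fin n) (Fin n) ℚ_[l]) : Subgroup (AlgebraicClosure ℚ_[l])ˣ :=
  Subgroup.closure
    {x : (AlgebraicClosure ℚ_[l])ˣ |
      (g.charpoly.map (algebraMap ℚ_[l] (AlgebraicClosure ℚ_[l]))).IsRoot
        (x : AlgebraicClosure ℚ_[l])}

/-- The natural map `GL_n(ℤ_l) → GL_n(ℚ_l)` induced by the inclusion `ℤ_l → ℚ_l`. -/
noncomputable def glMapToPadic (l : ℕ) [Fact l.Prime] (n : ℕ)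
    (g : (Matrix (Fin n) (Fin n) ℤ_[l])ˣ) : (Matrix (Fin n) (Fin n) ℚ_[l])ˣ :=
  Units.map (RingHom.mapMatrix (algebraMap ℤ_[l] ℚ_[l])).toMonoidHom g

/-- An element `g` of `GL_n(ℚ_l)` is *neat* (with respect to a fixed embedding
`ι : ℚ̄ → ℚ̄_l`) if the torsion subgroup of `ℚ̄^× ∩ Eig_l(g)` is trivial. -/
def IsNeatElem (l : ℕ) [Fact l.Prime] (n : ℕ)
    (ι : AlgebraicClosure ℚ →+* AlgebraicClosure ℚ_[l])
    (g : (Matrix (Fin n) (Fin n) ℚ_[l])ˣ) : Prop :=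
  ∀ x : (AlgebraicClosure ℚ)ˣ, IsOfFinOrder x →
    x ∈ (eigenvalueGroup l n (g : Matrix (Fin n) (Fin n) ℚ_[l])).comap
      (Units.map ι.toMonoidHom) → x = 1

/-- The first congruence kernel `K_l^{(1)} = ker (GL_n(ℤ_l) → GL_n(ℤ/lℤ))`. -/
noncomputable def firstCongruenceKernel (l : ℕ) [Fact l.Prime] (n : ℕ) :
    Subgroup (Matrix (Fin n) (Fin n) ℤ_[l])ˣ :=
  (Units.map (RingHom.mapMatrix (PadicInt.toZMod (p := l))).toMonoidHom).ker

open scoped NNReal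

lemma add_one_pow_sub_one_eq {R : Type*} [CommRing R] (y : R) (p : ℕ) :
    (y + 1) ^ p - 1 = y * (p + ∑ k ∈ Finset.Ico 2 (p + 1), y ^ (k - 1) * p.choose k) := by
  rcases p with _ | p
  · simp
  rw [add_pow, Finset.range_eq_Ico, Finset.sum_eq_sum_Ico_succ_bot (by omega),
    Finset.sum_eq_sum_Ico_succ_bot (by omega), mul_add, Finset.mul_sum]
  simp only [one_pow, mul_one, pow_zero, Nat.choose_zero_right, Nat.cast_one, pow_one,
    Nat.choose_one_right, zero_add]
  rw [add_sub_cancel_left, mul_comm y]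
  congr 1
  refine Finset.sum_congr rfl fun k hk => ?_
  rw [← mul_assoc, ← pow_succ', Nat.sub_add_cancel (by simp at hk; omega)]

lemma Subgroup.eq_one_of_isOfFinOrder_of_forall_pow_prime {G : Type*} [Group G]
    {S : Subgroup G} (hS : ∀ x ∈ S, ∀ p : ℕ, p.Prime → x ^ p = 1 → x = 1) {x : G} (hx : x ∈ S)
    (hfin : IsOfFinOrder x) : x = 1 := by
  by_contra hx1
  obtain ⟨p, hp, hdvd⟩ := Nat.exists_prime_and_dvd (orderOf_eq_one_iff.not.mpr hx1)
  have horder := orderOf_pow_orderOf_div hfin.orderOf_pos.ne' hdvd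
  rw [hS _ (S.pow_mem hx _) p hp (orderOf_dvd_iff_pow_eq_one.mp horder.dvd), orderOf_one]
    at horder
  exact hp.one_lt.ne horder

lemma Matrix.eval_charpoly_one_add_smul {F : Type*} [Field F] {n : Type*} [Fintype n]
    [DecidableEq n] (H : Matrix n n F) {c : F} (hc : c ≠ 0) (x : F) :
    (1 + c • H).charpoly.eval x = c ^ Fintype.card n * H.charpoly.eval ((x - 1) / c) := by
  have hscalar : c • scalar n ((x - 1) / c) = scalar n x - 1 := by
    rw [← map_one (scalar n), ← map_sub, scalar_apply, scalar_apply, ← diagonal_smul]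
    congr 1
    funext
    simp [mul_div_cancel₀ _ hc]
  rw [eval_charpoly, eval_charpoly, ← det_smul, smul_sub, hscalar, sub_sub, add_comm]

lemma Matrix.exists_eq_one_add_smul {R : Type*} [CommRing R] {n : Type*} [DecidableEq n]
    {c : R} {M : Matrix n n R} (hM : ∀ i j, c ∣ M i j - (1 : Matrix n n R) i j) :
    ∃ H : Matrix n n R, M = 1 + c • H := by
  choose H hH using hM
  exact ⟨Matrix.of H, by ext i j; simp [← hH]⟩

section Ultrametric

variable {K : Type*} [NormedField K] [IsUltrametricDist K]

lemma norm_eq_one_of_norm_sub_one_lt_one {x : K} (hx : ‖x - 1‖ < 1) : ‖x‖ = 1 := by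
  have h := IsUltrametricDist.norm_add_eq_max_of_norm_ne_norm (x := x - 1) (y := 1)
    (by rw [norm_one]; exact hx.ne)
  rwa [sub_add_cancel, norm_one, max_eq_right hx.le] at h

variable (K) in
def unitsClosedBallOne (r : ℝ≥0) (hr : r < 1) : Subgroup Kˣ where
  carrier := {x | ‖(x : K) - 1‖ ≤ r}
  one_mem' := by simp
  mul_mem' := by
    intro x y (hx : ‖(x : K) - 1‖ ≤ r) (hy : ‖(y : K) - 1‖ ≤ r)
    have hx1 : ‖(x : K)‖ = 1 := norm_eq_one_of_norm_sub_one_lt_one (hx.trans_lt hr)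
    show ‖(x : K) * y - 1‖ ≤ r
    calc ‖(x : K) * y - 1‖ = ‖(x : K) * (y - 1) + (x - 1)‖ := by ring_nf
      _ ≤ max ‖(x : K) * (y - 1)‖ ‖(x : K) - 1‖ := IsUltrametricDist.norm_add_le_max _ _
      _ ≤ r := max_le (by rwa [norm_mul, hx1, one_mul]) hx
  inv_mem' := by
    intro x (hx : ‖(x : K) - 1‖ ≤ r)
    have hx1 : ‖(x : K)‖ = 1 := norm_eq_one_of_norm_sub_one_lt_one (hx.trans_lt hr)
    have hinv : ((x⁻¹ : Kˣ) : K) - 1 = -((x : K) - 1) * ((x⁻¹ : Kˣ) : K) := by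
      rw [neg_sub, sub_mul, Units.mul_inv, one_mul]
    show ‖((x⁻¹ : Kˣ) : K) - 1‖ ≤ r
    rwa [hinv, norm_mul, norm_neg, Units.val_inv_eq_inv_val, norm_inv, hx1, inv_one, mul_one]

@[simp]
lemma mem_unitsClosedBallOne {r : ℝ≥0} {hr : r < 1} {x : Kˣ} :
    x ∈ unitsClosedBallOne K r hr ↔ ‖(x : K) - 1‖ ≤ r :=
  Iff.rfl

end Ultrametric

section Padic

variable {l : ℕ} [Fact l.Prime]

lemma Padic.norm_choose_mul_le (hl : l ≠ 2) {p k : ℕ} (hp : p.Prime) (hk : 2 ≤ k)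
    (hkp : k ≤ p) :
    ‖(p.choose k : ℚ_[l])‖ * (l : ℝ)⁻¹ ^ (k - 1) ≤ ‖(p : ℚ_[l])‖ * (l : ℝ)⁻¹ := by
  have hl3 : 3 ≤ l := (Fact.out : l.Prime).two_le.lt_of_ne' hl
  have hinv_nonneg : 0 ≤ (l : ℝ)⁻¹ := by positivity
  have hinv_le : (l : ℝ)⁻¹ ≤ 1 := inv_le_one_of_one_le₀ (by exact_mod_cast (by omega : 1 ≤ l))
  have hpow_le : (l : ℝ)⁻¹ ^ (k - 1) ≤ (l : ℝ)⁻¹ :=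
    pow_le_of_le_one hinv_nonneg hinv_le (by omega)
  obtain rfl | hpl := eq_or_ne p l
  · rw [Padic.norm_p]
    obtain hkp | rfl := hkp.lt_or_eq
    · obtain ⟨m, hm⟩ := hp.dvd_choose_self (by omega) hkp
      rw [hm, Nat.cast_mul, norm_mul, Padic.norm_p]
      gcongr
      exact mul_le_of_le_one_right hinv_nonneg (IsUltrametricDist.norm_natCast_le_one _ m)
    · rw [Nat.choose_self, Nat.cast_one, norm_one, one_mul, ← sq]
      exact pow_le_pow_of_le_one hinv_nonneg hinv_le (by omega)
  · have hp1 : ‖(p : ℚ_[l])‖ = 1 := Padic.norm_natCast_eq_one_iff.mpr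
      ((Nat.coprime_primes Fact.out hp).mpr hpl.symm)
    rw [hp1, one_mul]
    exact mul_le_of_le_one_left (by positivity) (IsUltrametricDist.norm_natCast_le_one _ _)
      |>.trans hpow_le

variable {K : Type*} [NormedField K] [NormedAlgebra ℚ_[l] K] [IsUltrametricDist K]

omit [IsUltrametricDist K] in
variable (l) in
lemma norm_natCast_eq_norm_natCast_padic (m : ℕ) : ‖(m : K)‖ = ‖(m : ℚ_[l])‖ := by
  rw [← map_natCast (algebraMap ℚ_[l] K), norm_algebraMap']

lemma eq_one_of_pow_eq_one_of_norm_sub_one_le (hl : l ≠ 2) {x : K}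
    (hx : ‖x - 1‖ ≤ (l : ℝ)⁻¹) {p : ℕ} (hp : p.Prime) (hxp : x ^ p = 1) : x = 1 := by
  by_contra hx1
  have hy : x - 1 ≠ 0 := sub_ne_zero.mpr hx1
  have hsum : (p : K) = -∑ k ∈ Finset.Ico 2 (p + 1), (x - 1) ^ (k - 1) * p.choose k := by
    have := add_one_pow_sub_one_eq (x - 1) p
    rw [sub_add_cancel, hxp, sub_self, zero_eq_mul] at this
    exact eq_neg_of_add_eq_zero_left (this.resolve_left hy)
  have hle : ‖(p : K)‖ ≤ ‖(p : ℚ_[l])‖ * (l : ℝ)⁻¹ := by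
    rw [hsum, norm_neg]
    refine IsUltrametricDist.norm_sum_le_of_forall_le_of_nonneg (by positivity) fun k hk => ?_
    obtain ⟨hk2, hkp⟩ := Finset.mem_Ico.mp hk
    rw [norm_mul, norm_pow, mul_comm, norm_natCast_eq_norm_natCast_padic l]
    calc _ ≤ ‖(p.choose k : ℚ_[l])‖ * (l : ℝ)⁻¹ ^ (k - 1) := by gcongr
      _ ≤ _ := Padic.norm_choose_mul_le hl hp hk2 (by omega)
  rw [norm_natCast_eq_norm_natCast_padic l] at hle
  have hp_pos : 0 < ‖(p : ℚ_[l])‖ := norm_pos_iff.mpr (Nat.cast_ne_zero.mpr hp.ne_zero)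
  have hl_inv : (l : ℝ)⁻¹ < 1 :=
    inv_lt_one_of_one_lt₀ (by exact_mod_cast (Fact.out : l.Prime).one_lt)
  nlinarith

lemma Units.eq_one_of_isOfFinOrder_of_norm_sub_one_le (hl : l ≠ 2) {x : Kˣ}
    (hx : ‖(x : K) - 1‖ ≤ (l : ℝ)⁻¹) (hfin : IsOfFinOrder x) : x = 1 := by
  have hr : (l : ℝ≥0)⁻¹ < 1 :=
    inv_lt_one_of_one_lt₀ (by exact_mod_cast (Fact.out : l.Prime).one_lt)
  refine Subgroup.eq_one_of_isOfFinOrder_of_forall_pow_prime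
    (S := unitsClosedBallOne K _ hr) (fun y hy p hp hyp => Units.ext ?_) (by simpa using hx) hfin
  refine eq_one_of_pow_eq_one_of_norm_sub_one_le hl (by simpa using hy) hp ?_
  rw [← Units.val_pow_eq_pow_val, hyp, Units.val_one]

lemma PadicAlgCl.norm_le_one_of_isIntegral {μ : PadicAlgCl l} (hμ : IsIntegral ℤ_[l] μ) :
    ‖μ‖ ≤ 1 := by
  obtain ⟨P, hP, hPμ⟩ := hμ
  have hroot : aeval μ (P.map (algebraMap ℤ_[l] ℚ_[l])) = 0 := by
    rwa [aeval_map_algebraMap, aeval_def]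
  calc ‖μ‖ = spectralAlgNorm ℚ_[l] (PadicAlgCl l) μ := rfl
    _ ≤ spectralValue (P.map (algebraMap ℤ_[l] ℚ_[l])) :=
      norm_root_le_spectralValue isPowMul_spectralNorm isNonarchimedean_spectralNorm
        (hP.map _) hroot
    _ ≤ 1 := (spectralValue_le_one_iff (hP.map _)).mpr fun k => by
      rw [coeff_map]; exact PadicInt.norm_le_one _

lemma PadicAlgCl.norm_sub_one_le_of_isRoot_charpoly {n : Type*} [Fintype n] [DecidableEq n]
    (H : Matrix n n ℤ_[l]) {x : PadicAlgCl l}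
    (hx : ((1 + (l : ℤ_[l]) • H).map (algebraMap ℤ_[l] (PadicAlgCl l))).charpoly.IsRoot x) :
    ‖x - 1‖ ≤ (l : ℝ)⁻¹ := by
  have hl0 : (l : PadicAlgCl l) ≠ 0 := Nat.cast_ne_zero.mpr (Fact.out : l.Prime).ne_zero
  have hmap : (1 + (l : ℤ_[l]) • H).map (algebraMap ℤ_[l] (PadicAlgCl l))
      = 1 + (l : PadicAlgCl l) • H.map (algebraMap ℤ_[l] (PadicAlgCl l)) := by
    rw [Matrix.map_add _ (map_add _), Matrix.map_one _ (map_zero _) (map_one _)]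
    congr 1
    ext i j
    simp
  rw [Polynomial.IsRoot, hmap, Matrix.eval_charpoly_one_add_smul _ hl0, mul_eq_zero] at hx
  rw [Matrix.charpoly_map, eval_map] at hx
  have hint : IsIntegral ℤ_[l] ((x - 1) / l) :=
    ⟨H.charpoly, H.charpoly_monic, hx.resolve_left (pow_ne_zero _ hl0)⟩
  calc ‖x - 1‖ = ‖(l : PadicAlgCl l)‖ * ‖(x - 1) / l‖ := by
        rw [← norm_mul, mul_div_cancel₀ _ hl0]
    _ ≤ (l : ℝ)⁻¹ * 1 := by
        rw [norm_natCast_eq_norm_natCast_padic l, Padic.norm_p]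
        gcongr
        exact PadicAlgCl.norm_le_one_of_isIntegral hint
    _ = (l : ℝ)⁻¹ := mul_one _

end Padic

section

variable {l n : ℕ} [Fact l.Prime]

lemma dvd_sub_one_of_mem_firstCongruenceKernel {h : (Matrix (Fin n) (Fin n) ℤ_[l])ˣ}
    (hh : h ∈ firstCongruenceKernel l n) (i j : Fin n) :
    (l : ℤ_[l]) ∣
      (h : Matrix (Fin n) (Fin n) ℤ_[l]) i j - (1 : Matrix (Fin n) (Fin n) ℤ_[l]) i j := by
  rw [firstCongruenceKernel, MonoidHom.mem_ker] at hh
  have hij : PadicInt.toZMod ((h : Matrix (Fin n) (Fin n) ℤ_[l]) i j) =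
      (1 : Matrix (Fin n) (Fin n) (ZMod l)) i j :=
    congrArg (fun u : (Matrix (Fin n) (Fin n) (ZMod l))ˣ =>
      (u : Matrix (Fin n) (Fin n) (ZMod l)) i j) hh
  rw [← Ideal.mem_span_singleton, ← PadicInt.maximalIdeal_eq_span_p, ← PadicInt.ker_toZMod,
    RingHom.mem_ker, map_sub, hij]
  rcases eq_or_ne i j with rfl | hne <;> simp [*]

lemma norm_sub_one_le_of_mem_eigenvalueGroup {g : (Matrix (Fin n) (Fin n) ℤ_[l])ˣ}
    (hg : ∀ i j, (l : ℤ_[l]) ∣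
      (g : Matrix (Fin n) (Fin n) ℤ_[l]) i j - (1 : Matrix (Fin n) (Fin n) ℤ_[l]) i j)
    {x : (PadicAlgCl l)ˣ} (hx : x ∈ eigenvalueGroup l n (glMapToPadic l n g)) :
    ‖(x : PadicAlgCl l) - 1‖ ≤ (l : ℝ)⁻¹ := by
  obtain ⟨H, hH⟩ := Matrix.exists_eq_one_add_smul hg
  have hcharpoly : ((glMapToPadic l n g : Matrix (Fin n) (Fin n) ℚ_[l]).charpoly.map
      (algebraMap ℚ_[l] (PadicAlgCl l))) =
      ((1 + (l : ℤ_[l]) • H).map (algebraMap ℤ_[l] (PadicAlgCl l))).charpoly := by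
    change map _ ((g : Matrix (Fin n) (Fin n) ℤ_[l]).map (algebraMap ℤ_[l] ℚ_[l])).charpoly = _
    rw [← hH, Matrix.charpoly_map, Matrix.charpoly_map, Polynomial.map_map,
      ← IsScalarTower.algebraMap_eq]
  have hr : (l : ℝ≥0)⁻¹ < 1 :=
    inv_lt_one_of_one_lt₀ (by exact_mod_cast (Fact.out : l.Prime).one_lt)
  have hle : eigenvalueGroup l n (glMapToPadic l n g) ≤ unitsClosedBallOne _ _ hr :=
    (Subgroup.closure_le _).mpr fun y (hy : Polynomial.IsRoot _ _) => by
      rw [hcharpoly] at hy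
      simpa using PadicAlgCl.norm_sub_one_le_of_isRoot_charpoly H hy
  simpa using hle hx

lemma eq_one_of_mem_eigenvalueGroup_of_isOfFinOrder (hl : l ≠ 2)
    {g : (Matrix (Fin n) (Fin n) ℤ_[l])ˣ}
    (hg : ∀ i j, (l : ℤ_[l]) ∣
      (g : Matrix (Fin n) (Fin n) ℤ_[l]) i j - (1 : Matrix (Fin n) (Fin n) ℤ_[l]) i j)
    {x : (PadicAlgCl l)ˣ} (hx : x ∈ eigenvalueGroup l n (glMapToPadic l n g))
    (hfin : IsOfFinOrder x) : x = 1 :=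
  Units.eq_one_of_isOfFinOrder_of_norm_sub_one_le hl (norm_sub_one_le_of_mem_eigenvalueGroup hg hx)
    hfin

end

theorem stmt_3_general (l : ℕ) [Fact l.Prime] (hl : l ≠ 2) (n : ℕ)
    (ι : AlgebraicClosure ℚ →+* AlgebraicClosure ℚ_[l])
    (g : (Matrix (Fin n) (Fin n) ℤ_[l])ˣ)
    (hg : ∀ i j, (l : ℤ_[l]) ∣
      ((g : Matrix (Fin n) (Fin n) ℤ_[l]) i j - (1 : Matrix (Fin n) (Fin n) ℤ_[l]) i j)) :
    (∀ x ∈ eigenvalueGroup l n ((glMapToPadic l n g : (Matrix (Fin n) (Fin n) ℚ_[l])ˣ) :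
        Matrix (Fin n) (Fin n) ℚ_[l]), IsOfFinOrder x → x = 1) ∧
    (∀ h ∈ firstCongruenceKernel l n, IsNeatElem l n ι (glMapToPadic l n h)) := by
  refine ⟨fun x hx hfin => eq_one_of_mem_eigenvalueGroup_of_isOfFinOrder hl hg hx hfin,
    fun h hh x hfin hx => Units.map_injective ι.injective ?_⟩
  rw [map_one]
  exact eq_one_of_mem_eigenvalueGroup_of_isOfFinOrder hl
    (dvd_sub_one_of_mem_firstCongruenceKernel hh) hx ((Units.map ι.toMonoidHom).isOfFinOrder hfin)

/-- Let `l` be an odd prime, `n ≥ 1`, and `g ∈ GL_n(ℤ_l)` congruent to the identity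
matrix modulo `l`. Then the subgroup of `ℚ̄_l^×` generated by the eigenvalues of `g` is
torsion-free (contains no root of unity other than `1`). In particular, the first
congruence kernel `K_l^{(1)} = ker(GL_n(ℤ_l) → GL_n(ℤ/lℤ))` is a neat subgroup of
`GL_n(ℚ_l)`. -/
theorem stmt_3 (l : ℕ) [Fact l.Prime] (hl : l ≠ 2) (n : ℕ) (hn : 1 ≤ n)
    (ι : AlgebraicClosure ℚ →+* AlgebraicClosure ℚ_[l])
    (g : (Matrix (Fin n) (Fin n) ℤ_[l])ˣ)
    (hg : ∀ i j, (l : ℤ_[l]) ∣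
      ((g : Matrix (Fin n) (Fin n) ℤ_[l]) i j - (1 : Matrix (Fin n) (Fin n) ℤ_[l]) i j)) :
    (∀ x ∈ eigenvalueGroup l n ((glMapToPadic l n g : (Matrix (Fin n) (Fin n) ℚ_[l])ˣ) :
        Matrix (Fin n) (Fin n) ℚ_[l]), IsOfFinOrder x → x = 1) ∧
    (∀ h ∈ firstCongruenceKernel l n, IsNeatElem l n ι (glMapToPadic l n h)) :=
  stmt_3_general l hl n ι g hg
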